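/- arXiv:1909.08790 — 2 statements merged into one kernel-verified Lean document; each statement's English description precedes it below -/
import Mathlib

section
/- Let ρ ∈ M₊([0,1]×Ω) and ρ₀, ρ₁ ∈ M₊(Ω). Define A_{ρ₀,ρ₁}(ρ) := inf{𝒜(ρ,m) : m ∈ M([0,1]×Ω;ℝ^d) with (ρ,m) ∈ CE(ρ₀,ρ₁)} ∈ [0,+∞] (with inf ∅ = +∞). Then A_{ρ₀,ρ₁}(ρ) equals the supremum, over all C¹ functions φ on [0,1]×Ω, of ⟨ρ₁, φ(1,·)⟩ − ⟨ρ₀, φ(0,·)⟩ − ⟨⟨ρ, ∂ₜφ + (1/2)|∇ₓφ|²⟩⟩. -/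
open MeasureTheory Set Filter Topology
open scoped ENNReal NNReal

noncomputable section

abbrev Euc (d : ℕ) : Type := EuclideanSpace ℝ (Fin d)

/-- Integral of a function against a finite signed measure. -/
def sInt {X : Type*} [MeasurableSpace X] (ν : SignedMeasure X) (f : X → ℝ) : ℝ :=
  (∫ x, f x ∂ν.toJordanDecomposition.posPart) - ∫ x, f x ∂ν.toJordanDecomposition.negPart

/-- Total variation norm of a finite signed measure. -/
def sTV {X : Type*} [MeasurableSpace X] (ν : SignedMeasure X) : ℝ :=
  (ν.totalVariation Set.univ).toReal

/-- Pairing of an `ℝ^d`-valued measure (given componentwise) with a vector field. -/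
def vInt {X : Type*} [MeasurableSpace X] {d : ℕ} (m : Fin d → SignedMeasure X)
    (b : X → Euc d) : ℝ :=
  ∑ i, sInt (m i) fun x => b x i

/-- Total variation norm of a vector measure, via duality with continuous fields. -/
def vTV {X : Type*} [MeasurableSpace X] [TopologicalSpace X] {d : ℕ}
    (m : Fin d → SignedMeasure X) : ℝ :=
  ⨆ b : {b : C(X, Euc d) // ∀ x, ‖b x‖ ≤ 1}, vInt m fun x => (b : C(X, Euc d)) x

/-- The Benamou-Brenier action. -/
def actionBB {X : Type*} [MeasurableSpace X] [TopologicalSpace X] {d : ℕ}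
    (ρ : SignedMeasure X) (m : Fin d → SignedMeasure X) : ℝ≥0∞ :=
  ⨆ p : {q : C(X, ℝ) × C(X, Euc d) // ∀ x, q.1 x + ‖q.2 x‖ ^ 2 / 2 ≤ 0},
    ENNReal.ofReal (sInt ρ (p : C(X, ℝ) × C(X, Euc d)).1 + vInt m (p : C(X, ℝ) × C(X, Euc d)).2)

/-- The space-time domain `[0,1] × Ω`. -/
abbrev STt (d : ℕ) (Ω : Set (Euc d)) : Type := ↥(Icc (0:ℝ) 1) × ↥Ω

def STemb {d : ℕ} {Ω : Set (Euc d)} (p : STt d Ω) : ℝ × Euc d := ((p.1 : ℝ), (p.2 : Euc d))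

/-- The (weak formulation of the) continuity equation with temporal boundary data `ρ₀, ρ₁`. -/
def CEeq (d : ℕ) (Ω : Set (Euc d)) (ρ₀ ρ₁ : SignedMeasure ↥Ω)
    (ρ : SignedMeasure (STt d Ω)) (m : Fin d → SignedMeasure (STt d Ω)) : Prop :=
  ∀ φ : ℝ × Euc d → ℝ, ContDiff ℝ 1 φ →
    sInt ρ (fun p => fderiv ℝ φ (STemb p) (1, 0)) +
      ∑ i, sInt (m i) (fun p => fderiv ℝ φ (STemb p) (0, EuclideanSpace.single i 1)) =
    sInt ρ₁ (fun x => φ (1, (x : Euc d))) - sInt ρ₀ (fun x => φ (0, (x : Euc d)))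

open scoped Classical in
/-- The functional `J_{ρ₀,ρ₁}`. -/
def Jfun (d : ℕ) (Ω : Set (Euc d)) (ρ₀ ρ₁ : SignedMeasure ↥Ω)
    (ρ : SignedMeasure (STt d Ω)) (m : Fin d → SignedMeasure (STt d Ω)) : ℝ≥0∞ :=
  if CEeq d Ω ρ₀ ρ₁ ρ m then actionBB ρ m else ⊤

/-- The quadratic Wasserstein distance. -/
def W2 {d : ℕ} {Ω : Set (Euc d)} (μ ν : Measure ↥Ω) : ℝ :=
  Real.sqrt (sInf {c : ℝ | ∃ π : Measure (↥Ω × ↥Ω), IsFiniteMeasure π ∧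
    π.map Prod.fst = μ ∧ π.map Prod.snd = ν ∧
    c = ∫ p, ‖(p.1 : Euc d) - (p.2 : Euc d)‖ ^ 2 ∂π})

/-!
Weak duality: if `m` solves the continuity equation and `φ` is a `C¹` potential, testing the
action with `a = -|∇φ|²/2`, `b = ∇φ` produces exactly the dual objective of `φ`.

Strong duality: if the dual value `S` is finite, then `ℓ φ - ‖∇φ‖²/2 ≤ S` for every `φ`, where
`ℓ φ = ⟨ρ₁, φ(1)⟩ - ⟨ρ₀, φ(0)⟩ - ⟨⟨ρ, ∂ₜφ⟩⟩` and the norm is that of `L²(ρ; ℝ^d)`. Scaling `φ`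
gives `|ℓ φ| ≤ √(2S) ‖∇φ‖`, so `ℓ` is a bounded functional of `∇φ`; Hahn–Banach and Riesz
represent it by some `v ∈ L²(ρ; ℝ^d)` with `‖v‖²/2 ≤ S`. The momentum `m = v ρ` then solves the
continuity equation, and its action is at most `‖v‖²/2` because `a + b·v ≤ |v|²/2` whenever
`a + |b|²/2 ≤ 0`.
-/

open scoped RealInnerProductSpace

lemma le_sqrt_two_mul_mul_of_forall_mul_sub_sq_le {l n S : ℝ} (hn : 0 ≤ n)
    (h : ∀ t : ℝ, 0 < t → t * l - (t * n) ^ 2 / 2 ≤ S) : l ≤ Real.sqrt (2 * S) * n := by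
  rcases le_or_gt l 0 with hl | hl
  · exact hl.trans (by positivity)
  rcases hn.eq_or_lt with rfl | hn
  · have := h ((|S| + 1) / l) (by positivity)
    rw [div_mul_cancel₀ _ hl.ne'] at this
    linarith [le_abs_self S]
  · have hsq : l ^ 2 ≤ 2 * S * n ^ 2 := by
      have := h (l / n ^ 2) (by positivity)
      have e : l / n ^ 2 * l - (l / n ^ 2 * n) ^ 2 / 2 = l ^ 2 / (2 * n ^ 2) := by
        field_simp; ring
      rw [e, div_le_iff₀ (by positivity)] at this
      linarith
    rw [← Real.sqrt_mul_self hn.le, ← Real.sqrt_mul (by nlinarith [sq_nonneg l])]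
    exact Real.le_sqrt_of_sq_le (by nlinarith)

theorem exists_inner_eq_of_forall_sub_norm_sq_le {V E : Type*} [AddCommGroup V] [Module ℝ V]
    [NormedAddCommGroup E] [InnerProductSpace ℝ E] [CompleteSpace E]
    (G : V →ₗ[ℝ] E) (L : V →ₗ[ℝ] ℝ) {S : ℝ} (h : ∀ φ, L φ - ‖G φ‖ ^ 2 / 2 ≤ S) :
    ∃ v : E, ‖v‖ ^ 2 / 2 ≤ S ∧ ∀ φ, ⟪v, G φ⟫ = L φ := by
  set C := Real.sqrt (2 * S)
  have hS : 0 ≤ S := by simpa using h 0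
  have hbound : ∀ φ, |L φ| ≤ C * ‖G φ‖ := by
    have key : ∀ φ, L φ ≤ C * ‖G φ‖ := fun φ =>
      le_sqrt_two_mul_mul_of_forall_mul_sub_sq_le (norm_nonneg _) fun t ht => by
        simpa [norm_smul, abs_of_pos ht] using h (t • φ)
    exact fun φ => abs_le.2 ⟨by linarith [show -L φ ≤ C * ‖G φ‖ by simpa using key (-φ)], key φ⟩
  have hker : LinearMap.ker G ≤ LinearMap.ker L := fun φ hφ => by
    simpa [LinearMap.mem_ker.1 hφ] using hbound φ
  let ℓ : LinearMap.range G →ₗ[ℝ] ℝ :=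
    (LinearMap.ker G).liftQ L hker ∘ₗ G.quotKerEquivRange.symm.toLinearMap
  have hℓ : ∀ φ, ℓ (G.rangeRestrict φ) = L φ := fun φ => by
    have : G.rangeRestrict φ = G.quotKerEquivRange (Submodule.Quotient.mk φ) :=
      Subtype.ext (G.quotKerEquivRange_apply_mk φ).symm
    simp [ℓ, this]
  have hℓC : ∀ g, ‖ℓ g‖ ≤ C * ‖g‖ := by
    intro g
    obtain ⟨φ, rfl⟩ := G.surjective_rangeRestrict g
    simpa [hℓ] using hbound φ
  obtain ⟨f, hf, hfnorm⟩ := exists_extension_norm_eq _ (ℓ.mkContinuous C hℓC)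
  refine ⟨(InnerProductSpace.toDual ℝ E).symm f, ?_, fun φ => ?_⟩
  · have : ‖(InnerProductSpace.toDual ℝ E).symm f‖ ≤ C := by
      rw [LinearIsometryEquiv.norm_map, hfnorm]
      exact LinearMap.mkContinuous_norm_le _ (Real.sqrt_nonneg _) hℓC
    have := pow_le_pow_left₀ (norm_nonneg _) this 2
    rw [Real.sq_sqrt (by positivity)] at this
    linarith
  · rw [InnerProductSpace.toDual_symm_apply]
    simpa [hℓ] using hf (G.rangeRestrict φ)

section SignedIntegral

variable {X : Type*} [MeasurableSpace X]

lemma sInt_toSignedMeasure_sub_of_mutuallySingular (μ ν : Measure X) [IsFiniteMeasure μ]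
    [IsFiniteMeasure ν] (h : μ ⟂ₘ ν) (f : X → ℝ) :
    sInt (μ.toSignedMeasure - ν.toSignedMeasure) f = (∫ x, f x ∂μ) - ∫ x, f x ∂ν := by
  have hj : (μ.toSignedMeasure - ν.toSignedMeasure).toJordanDecomposition = ⟨μ, ν, h⟩ :=
    SignedMeasure.toJordanDecomposition_eq rfl
  rw [sInt, hj]

lemma sInt_toSignedMeasure (μ : Measure X) [IsFiniteMeasure μ] (f : X → ℝ) :
    sInt μ.toSignedMeasure f = ∫ x, f x ∂μ := by
  simpa using sInt_toSignedMeasure_sub_of_mutuallySingular μ 0 .zero_right f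

lemma sInt_withDensityᵥ (μ : Measure X) {w : X → ℝ} (hw : Integrable w μ) (hwm : Measurable w)
    {f : X → ℝ} (hf : AEStronglyMeasurable f μ) {C : ℝ} (hC : ∀ x, ‖f x‖ ≤ C) :
    sInt (μ.withDensityᵥ w) f = ∫ x, f x * w x ∂μ := by
  have := isFiniteMeasure_withDensity_ofReal hw.2
  have := isFiniteMeasure_withDensity_ofReal hw.fun_neg.2
  rw [withDensityᵥ_eq_withDensity_pos_part_sub_withDensity_neg_part hw,
    sInt_toSignedMeasure_sub_of_mutuallySingular _ _ (withDensity_ofReal_mutuallySingular hwm),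
    integral_withDensity_eq_integral_toReal_smul hwm.ennreal_ofReal
      (.of_forall fun _ => ENNReal.ofReal_lt_top),
    integral_withDensity_eq_integral_toReal_smul hwm.fun_neg.ennreal_ofReal
      (.of_forall fun _ => ENNReal.ofReal_lt_top),
    ← integral_sub]
  · congr 1 with x
    simp only [ENNReal.toReal_ofReal', smul_eq_mul]
    linear_combination f x * max_zero_sub_max_neg_zero_eq_self (w x)
  exacts [(hw.pos_part.bdd_mul hf (.of_forall hC)).congr
      (.of_forall fun x => by simp [ENNReal.toReal_ofReal', mul_comm]),
    (hw.fun_neg.pos_part.bdd_mul hf (.of_forall hC)).congr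
      (.of_forall fun x => by simp [ENNReal.toReal_ofReal', mul_comm])]

end SignedIntegral

section CompactDomain

variable {X : Type*} [TopologicalSpace X] [CompactSpace X] [MeasurableSpace X]
  [OpensMeasurableSpace X] (μ : Measure X) [IsFiniteMeasure μ]

lemma Continuous.integrable_of_compactSpace {E : Type*} [NormedAddCommGroup E]
    {f : X → E} (hf : Continuous f) : Integrable f μ :=
  hf.integrable_of_hasCompactSupport (HasCompactSupport.of_compactSpace f)

def ContinuousMap.integralₗ : C(X, ℝ) →ₗ[ℝ] ℝ where
  toFun f := ∫ x, f x ∂μ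
  map_add' f g := integral_add (f.continuous.integrable_of_compactSpace μ)
    (g.continuous.integrable_of_compactSpace μ)
  map_smul' c f := integral_const_mul c f

end CompactDomain

lemma L2.norm_sq_eq_integral_norm_sq {X E : Type*} [MeasurableSpace X] {μ : Measure X}
    [NormedAddCommGroup E] [InnerProductSpace ℝ E] (f : Lp E 2 μ) :
    ‖f‖ ^ 2 = ∫ x, ‖f x‖ ^ 2 ∂μ := by
  simp only [← real_inner_self_eq_norm_sq, L2.inner_def]

section Momentum

variable {X : Type*} [MeasurableSpace X] {d : ℕ}

def withDensityVec (μ : Measure X) (v : X → Euc d) (i : Fin d) : SignedMeasure X :=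
  μ.withDensityᵥ fun x => v x i

variable [TopologicalSpace X] [CompactSpace X] [OpensMeasurableSpace X] (μ : Measure X)

lemma vInt_withDensityVec {v : X → Euc d} (hv : Integrable v μ) (hvm : Measurable v)
    (b : C(X, Euc d)) : vInt (withDensityVec μ v) b = ∫ x, ⟪b x, v x⟫ ∂μ := by
  have hbi : ∀ i x, ‖b x i‖ ≤ ‖b‖ := fun i x =>
    (PiLp.norm_apply_le (b x) i).trans (b.norm_coe_le_norm x)
  have hbm : ∀ i, AEStronglyMeasurable (fun x => b x i) μ := fun i =>
    ((EuclideanSpace.proj i).continuous.comp b.continuous).aestronglyMeasurable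
  have hvi : ∀ i, Integrable (fun x => v x i) μ := fun i =>
    (EuclideanSpace.proj (𝕜 := ℝ) i).integrable_comp hv
  simp only [vInt, withDensityVec]
  rw [Finset.sum_congr rfl fun i _ => sInt_withDensityᵥ μ (hvi i)
      ((EuclideanSpace.proj (𝕜 := ℝ) i).measurable.comp hvm) (hbm i) (hbi i),
    ← integral_finsetSum _ fun i _ => (hvi i).bdd_mul (hbm i) (.of_forall (hbi i))]
  simp [PiLp.inner_apply, mul_comm]

lemma actionBB_withDensityVec_le [IsFiniteMeasure μ] {v : X → Euc d} (hv : MemLp v 2 μ)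
    (hvm : Measurable v) :
    actionBB μ.toSignedMeasure (withDensityVec μ v) ≤
      ENNReal.ofReal ((∫ x, ‖v x‖ ^ 2 ∂μ) / 2) := by
  refine iSup_le fun ⟨(a, b), hab⟩ => ENNReal.ofReal_le_ofReal ?_
  have hinner : Integrable (fun x => ⟪b x, v x⟫) μ :=
    ((hv.integrable one_le_two).norm.const_mul ‖b‖).mono'
      (b.continuous.aestronglyMeasurable.inner hv.aestronglyMeasurable)
      (.of_forall fun x => (norm_inner_le_norm _ _).trans
        (mul_le_mul_of_nonneg_right (b.norm_coe_le_norm x) (norm_nonneg _)))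
  rw [sInt_toSignedMeasure, vInt_withDensityVec μ (hv.integrable one_le_two) hvm b,
    ← integral_add (a.continuous.integrable_of_compactSpace μ) hinner, ← integral_div]
  refine integral_mono ((a.continuous.integrable_of_compactSpace μ).add hinner)
    (hv.integrable_norm_pow two_ne_zero |>.div_const 2) fun x => ?_
  nlinarith [hab x, real_inner_le_norm (b x) (v x), sq_nonneg (‖b x‖ - ‖v x‖)]

end Momentum

section ContDiffOneSubmodule

variable (𝕜 : Type*) [NontriviallyNormedField 𝕜] (E F : Type*) [NormedAddCommGroup E]
  [NormedSpace 𝕜 E] [NormedAddCommGroup F] [NormedSpace 𝕜 F]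

def contDiffOneSubmodule : Submodule 𝕜 (E → F) where
  carrier := {φ | ContDiff 𝕜 1 φ}
  add_mem' {φ ψ} (hφ : ContDiff 𝕜 1 φ) (hψ : ContDiff 𝕜 1 ψ) := hφ.add hψ
  zero_mem' := (contDiff_const : ContDiff 𝕜 1 fun _ : E => (0 : F))
  smul_mem' c φ (hφ : ContDiff 𝕜 1 φ) := hφ.const_smul c

variable {𝕜 E F} in
lemma mem_contDiffOneSubmodule {φ : E → F} :
    φ ∈ contDiffOneSubmodule 𝕜 E F ↔ ContDiff 𝕜 1 φ :=
  Iff.rfl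

end ContDiffOneSubmodule

section SpaceTime

variable {d : ℕ} {Ω : Set (Euc d)}

local notation "C¹" => contDiffOneSubmodule ℝ (ℝ × Euc d) ℝ

lemma continuous_STemb : Continuous (STemb : STt d Ω → ℝ × Euc d) := by
  unfold STemb; fun_prop

def spaceTimeFDeriv : C¹ →ₗ[ℝ] C(STt d Ω, ℝ × Euc d →L[ℝ] ℝ) where
  toFun φ := ⟨fun p => fderiv ℝ φ (STemb p),
    ((mem_contDiffOneSubmodule.1 φ.2).continuous_fderiv one_ne_zero).comp continuous_STemb⟩
  map_add' φ ψ := by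
    ext p : 1
    exact fderiv_add ((mem_contDiffOneSubmodule.1 φ.2).differentiable one_ne_zero _)
      ((mem_contDiffOneSubmodule.1 ψ.2).differentiable one_ne_zero _)
  map_smul' c φ := by
    ext p : 1
    exact fderiv_const_smul ((mem_contDiffOneSubmodule.1 φ.2).differentiable one_ne_zero _) c

def spatialGradientOfFDeriv : (ℝ × Euc d →L[ℝ] ℝ) →L[ℝ] Euc d :=
  (EuclideanSpace.equiv (Fin d) ℝ).symm.toContinuousLinearMap ∘L
    ContinuousLinearMap.pi fun i => ContinuousLinearMap.apply ℝ ℝ (0, EuclideanSpace.single i 1)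

def timeDeriv : C¹ →ₗ[ℝ] C(STt d Ω, ℝ) :=
  ((ContinuousLinearMap.apply ℝ ℝ ((1, 0) : ℝ × Euc d)).compLeftContinuous ℝ
    (STt d Ω)).toLinearMap ∘ₗ spaceTimeFDeriv

def spaceGradient : C¹ →ₗ[ℝ] C(STt d Ω, Euc d) :=
  (spatialGradientOfFDeriv.compLeftContinuous ℝ (STt d Ω)).toLinearMap ∘ₗ spaceTimeFDeriv

lemma vInt_spaceGradient (m : Fin d → SignedMeasure (STt d Ω)) (φ : C¹) :
    vInt m (spaceGradient φ) =
      ∑ i, sInt (m i) fun p =>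
        fderiv ℝ (φ : ℝ × Euc d → ℝ) (STemb p) (0, EuclideanSpace.single i 1) :=
  rfl

def timeSlice (t : ℝ) : C¹ →ₗ[ℝ] C(Ω, ℝ) where
  toFun φ := ⟨fun x => (φ : ℝ × Euc d → ℝ) (t, x),
    (mem_contDiffOneSubmodule.1 φ.2).continuous.comp (by fun_prop)⟩
  map_add' _ _ := rfl
  map_smul' _ _ := rfl

variable [CompactSpace Ω] (ρ₀ ρ₁ : Measure Ω) [IsFiniteMeasure ρ₀] [IsFiniteMeasure ρ₁]
  (ρ : Measure (STt d Ω)) [IsFiniteMeasure ρ]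

def ceFunctional : C¹ →ₗ[ℝ] ℝ :=
  ContinuousMap.integralₗ ρ₁ ∘ₗ timeSlice 1 - ContinuousMap.integralₗ ρ₀ ∘ₗ timeSlice 0 -
    ContinuousMap.integralₗ ρ ∘ₗ timeDeriv

def dualObjective (φ : C¹) : ℝ :=
  ceFunctional ρ₀ ρ₁ ρ φ - (∫ p, ‖spaceGradient φ p‖ ^ 2 ∂ρ) / 2

lemma ceFunctional_apply (φ : C¹) :
    ceFunctional ρ₀ ρ₁ ρ φ = (∫ x, (φ : ℝ × Euc d → ℝ) (1, (x : Euc d)) ∂ρ₁) -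
      (∫ x, (φ : ℝ × Euc d → ℝ) (0, (x : Euc d)) ∂ρ₀) -
      ∫ p, fderiv ℝ (φ : ℝ × Euc d → ℝ) (STemb p) (1, 0) ∂ρ :=
  rfl

lemma CEeq_iff_forall_vInt_spaceGradient (m : Fin d → SignedMeasure (STt d Ω)) :
    CEeq d Ω ρ₀.toSignedMeasure ρ₁.toSignedMeasure ρ.toSignedMeasure m ↔
      ∀ φ : C¹, vInt m (spaceGradient φ) = ceFunctional ρ₀ ρ₁ ρ φ := by
  simp only [CEeq, sInt_toSignedMeasure, vInt_spaceGradient, ceFunctional_apply]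
  refine ⟨fun h φ => ?_, fun h φ hφ => ?_⟩
  · linarith [h φ φ.2]
  · linarith [h ⟨φ, hφ⟩]

lemma ofReal_dualObjective_le_actionBB {m : Fin d → SignedMeasure (STt d Ω)}
    (hm : CEeq d Ω ρ₀.toSignedMeasure ρ₁.toSignedMeasure ρ.toSignedMeasure m) (φ : C¹) :
    ENNReal.ofReal (dualObjective ρ₀ ρ₁ ρ φ) ≤ actionBB ρ.toSignedMeasure m := by
  let a : C(STt d Ω, ℝ) := ⟨fun p => -(‖spaceGradient φ p‖ ^ 2 / 2), by fun_prop⟩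
  refine le_iSup_of_le ⟨(a, spaceGradient φ), fun p => by simp [a]⟩ (le_of_eq ?_)
  congr 1
  rw [sInt_toSignedMeasure, (CEeq_iff_forall_vInt_spaceGradient ρ₀ ρ₁ ρ m).1 hm φ, dualObjective]
  simp only [a, ContinuousMap.coe_mk, integral_neg, integral_div]
  ring

lemma iInf_actionBB_le_ofReal {S : ℝ} (h : ∀ φ, dualObjective ρ₀ ρ₁ ρ φ ≤ S) :
    ⨅ (m : Fin d → SignedMeasure (STt d Ω))
        (_ : CEeq d Ω ρ₀.toSignedMeasure ρ₁.toSignedMeasure ρ.toSignedMeasure m),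
        actionBB ρ.toSignedMeasure m ≤ ENNReal.ofReal S := by
  let G : C¹ →ₗ[ℝ] Lp (Euc d) 2 ρ := (ContinuousMap.toLp 2 ρ ℝ).toLinearMap ∘ₗ spaceGradient
  have hG : ∀ φ, G φ =ᵐ[ρ] spaceGradient φ := fun φ => ContinuousMap.coeFn_toLp ρ _
  have hGnorm : ∀ φ, ‖G φ‖ ^ 2 = ∫ p, ‖spaceGradient φ p‖ ^ 2 ∂ρ := fun φ => by
    rw [L2.norm_sq_eq_integral_norm_sq]
    exact integral_congr_ae ((hG φ).mono fun p hp => by simp only [hp])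
  obtain ⟨v, hv, hvG⟩ := exists_inner_eq_of_forall_sub_norm_sq_le G (ceFunctional ρ₀ ρ₁ ρ)
    (S := S) fun φ => hGnorm φ ▸ h φ
  have hvm : Measurable v := (Lp.stronglyMeasurable v).measurable
  have hCE : CEeq d Ω ρ₀.toSignedMeasure ρ₁.toSignedMeasure ρ.toSignedMeasure
      (withDensityVec ρ v) := by
    refine (CEeq_iff_forall_vInt_spaceGradient ρ₀ ρ₁ ρ _).2 fun φ => ?_
    rw [vInt_withDensityVec ρ ((Lp.memLp v).integrable one_le_two) hvm, ← hvG φ, L2.inner_def]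
    refine integral_congr_ae ((hG φ).mono fun p hp => ?_)
    simp only [hp, real_inner_comm]
  calc _ ≤ actionBB ρ.toSignedMeasure (withDensityVec ρ v) := iInf₂_le _ hCE
    _ ≤ ENNReal.ofReal ((∫ x, ‖v x‖ ^ 2 ∂ρ) / 2) :=
      actionBB_withDensityVec_le ρ (Lp.memLp v) hvm
    _ ≤ ENNReal.ofReal S := ENNReal.ofReal_le_ofReal (by rwa [← L2.norm_sq_eq_integral_norm_sq])

lemma iSup_ofReal_dualObjective_le_iInf_actionBB :
    ⨆ φ : C¹, ENNReal.ofReal (dualObjective ρ₀ ρ₁ ρ φ) ≤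
      ⨅ (m : Fin d → SignedMeasure (STt d Ω))
        (_ : CEeq d Ω ρ₀.toSignedMeasure ρ₁.toSignedMeasure ρ.toSignedMeasure m),
        actionBB ρ.toSignedMeasure m :=
  iSup_le fun φ => le_iInf₂ fun _ hm => ofReal_dualObjective_le_actionBB ρ₀ ρ₁ ρ hm φ

lemma iInf_actionBB_le_iSup_ofReal_dualObjective :
    ⨅ (m : Fin d → SignedMeasure (STt d Ω))
        (_ : CEeq d Ω ρ₀.toSignedMeasure ρ₁.toSignedMeasure ρ.toSignedMeasure m),
        actionBB ρ.toSignedMeasure m ≤ ⨆ φ : C¹, ENNReal.ofReal (dualObjective ρ₀ ρ₁ ρ φ) := by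
  rcases eq_top_or_lt_top (⨆ φ : C¹, ENNReal.ofReal (dualObjective ρ₀ ρ₁ ρ φ)) with hD | hD
  · exact hD ▸ le_top
  refine (iInf_actionBB_le_ofReal ρ₀ ρ₁ ρ fun φ => ?_).trans (ENNReal.ofReal_toReal hD.ne).le
  exact (ENNReal.ofReal_le_iff_le_toReal hD.ne).1 (le_iSup_of_le φ le_rfl)

lemma dualObjective_eq (φ : {φ : ℝ × Euc d → ℝ // ContDiff ℝ 1 φ}) :
    dualObjective ρ₀ ρ₁ ρ ⟨φ.1, φ.2⟩ = (∫ x, (φ : ℝ × Euc d → ℝ) (1, (x : Euc d)) ∂ρ₁) -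
      (∫ x, (φ : ℝ × Euc d → ℝ) (0, (x : Euc d)) ∂ρ₀) -
      ∫ p, (fderiv ℝ (φ : ℝ × Euc d → ℝ) (STemb p) (1, 0) +
        (∑ i, (fderiv ℝ (φ : ℝ × Euc d → ℝ) (STemb p) (0, EuclideanSpace.single i 1)) ^ 2) / 2)
        ∂ρ := by
  have hnorm : ∀ p, ‖spaceGradient (Ω := Ω) ⟨φ.1, φ.2⟩ p‖ ^ 2 =
      ∑ i, (fderiv ℝ (φ : ℝ × Euc d → ℝ) (STemb p) (0, EuclideanSpace.single i 1)) ^ 2 :=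
    fun p => EuclideanSpace.real_norm_sq_eq _
  simp only [← hnorm]
  rw [dualObjective, ceFunctional_apply, integral_add, integral_div]
  · ring
  · exact (timeDeriv ⟨φ.1, φ.2⟩).continuous.integrable_of_compactSpace ρ
  · exact ((spaceGradient _).continuous.norm.pow 2).integrable_of_compactSpace ρ |>.div_const 2

end SpaceTime

theorem stmt9_general {d : ℕ} (Ω : Set (Euc d))
    (hcomp : IsCompact Ω)
    (ρ : Measure (STt d Ω)) [IsFiniteMeasure ρ]
    (ρ₀ ρ₁ : Measure ↥Ω) [IsFiniteMeasure ρ₀] [IsFiniteMeasure ρ₁] :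
    (⨅ (m : Fin d → SignedMeasure (STt d Ω))
        (_ : CEeq d Ω ρ₀.toSignedMeasure ρ₁.toSignedMeasure ρ.toSignedMeasure m),
        actionBB ρ.toSignedMeasure m) =
      ⨆ φ : {φ : ℝ × Euc d → ℝ // ContDiff ℝ 1 φ},
        ENNReal.ofReal ((∫ x, (φ : ℝ × Euc d → ℝ) (1, (x : Euc d)) ∂ρ₁) -
          (∫ x, (φ : ℝ × Euc d → ℝ) (0, (x : Euc d)) ∂ρ₀) -
          ∫ p, (fderiv ℝ (φ : ℝ × Euc d → ℝ) (STemb p) (1, 0) +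
            (∑ i, (fderiv ℝ (φ : ℝ × Euc d → ℝ) (STemb p) (0, EuclideanSpace.single i 1)) ^ 2) / 2) ∂ρ) := by
  have : CompactSpace Ω := isCompact_iff_compactSpace.mp hcomp
  simp only [← dualObjective_eq]
  -- the index types `{φ // ContDiff ℝ 1 φ}` and `contDiffOneSubmodule ℝ (ℝ × Euc d) ℝ` agree
  -- definitionally
  exact le_antisymm (iInf_actionBB_le_iSup_ofReal_dualObjective ρ₀ ρ₁ ρ)
    (iSup_ofReal_dualObjective_le_iInf_actionBB ρ₀ ρ₁ ρ)

/-- Dual formulation of the minimal action over momenta satisfying the continuity equation: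
`A_{ρ₀,ρ₁}(ρ) = sup_φ (⟨ρ₁,φ(1,·)⟩ − ⟨ρ₀,φ(0,·)⟩ − ⟨⟨ρ, ∂ₜφ + |∇ₓφ|²/2⟩⟩)`,
the supremum being over all C¹ functions `φ` on `[0,1]×Ω`. -/
theorem stmt9 {d : ℕ} (hd : 1 ≤ d) (Ω : Set (Euc d)) (hne : Ω.Nonempty)
    (hcomp : IsCompact Ω) (hconv : Convex ℝ Ω)
    (ρ : Measure (STt d Ω)) [IsFiniteMeasure ρ]
    (ρ₀ ρ₁ : Measure ↥Ω) [IsFiniteMeasure ρ₀] [IsFiniteMeasure ρ₁] :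
    (⨅ (m : Fin d → SignedMeasure (STt d Ω))
        (_ : CEeq d Ω ρ₀.toSignedMeasure ρ₁.toSignedMeasure ρ.toSignedMeasure m),
        actionBB ρ.toSignedMeasure m) =
      ⨆ φ : {φ : ℝ × Euc d → ℝ // ContDiff ℝ 1 φ},
        ENNReal.ofReal ((∫ x, (φ : ℝ × Euc d → ℝ) (1, (x : Euc d)) ∂ρ₁) -
          (∫ x, (φ : ℝ × Euc d → ℝ) (0, (x : Euc d)) ∂ρ₀) -
          ∫ p, (fderiv ℝ (φ : ℝ × Euc d → ℝ) (STemb p) (1, 0) +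
            (∑ i, (fderiv ℝ (φ : ℝ × Euc d → ℝ) (STemb p) (0, EuclideanSpace.single i 1)) ^ 2) / 2) ∂ρ) :=
  stmt9_general Ω hcomp ρ ρ₀ ρ₁
end
end

section
/- Fix an integer d ≥ 1, let x, y ∈ ℝ^d and let γ(t) := (1−t)x + ty for t ∈ [0,1]. Define the nonnegative Borel measure ρ̂ on ℝ^d by ⟨ρ̂,φ⟩ := ∫₀¹ φ(γ(t)) dt for bounded continuous φ, and the ℝ^d-valued Borel measures m̂₁, m̂₂ by ⟨m̂₁,b⟩ := −∫₀¹ (1−t)·b(γ(t))·(y−x) dt and ⟨m̂₂,b⟩ := ∫₀¹ t·b(γ(t))·(y−x) dt for bounded continuous b : ℝ^d → ℝ^d. Then: (i) for every continuously differentiable φ : ℝ^d → ℝ, −⟨m̂₁,∇φ⟩ = ⟨ρ̂,φ⟩ − φ(x) and −⟨m̂₂,∇φ⟩ = ⟨ρ̂,φ⟩ − φ(y), i.e. ∇·m̂₁ = ρ̂ − δ_x and ∇·m̂₂ = ρ̂ − δ_y in the weak sense; (ii) for i ∈ {1,2} and all bounded continuous a : ℝ^d → ℝ and b : ℝ^d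 → ℝ^d satisfying a(z) + |b(z)|²/2 ≤ 0 for every z ∈ ℝ^d, one has ⟨ρ̂,a⟩ + ⟨m̂ᵢ,b⟩ ≤ |x−y|²/2 (so that the Benamou–Brenier actions satisfy A(ρ̂,m̂ᵢ) ≤ |x−y|²/2). -/
open MeasureTheory Set
open scoped ENNReal BoundedContinuousFunction

noncomputable section

/-- The segment measure `ρ̂`: image of Lebesgue measure on `[0,1]` under
`t ↦ (1−t)x + ty`. -/
def segMeas {d : ℕ} (x y : Euc d) : Measure (Euc d) :=
  (volume.restrict (Icc (0:ℝ) 1)).map (fun t => (1 - t) • x + t • y)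

/-- The momentum `m̂₁`, with density `−(1−t)(y−x)` along the segment. -/
def segMom₁ {d : ℕ} (x y : Euc d) : Fin d → SignedMeasure (Euc d) := fun i =>
  ((volume.restrict (Icc (0:ℝ) 1)).withDensityᵥ fun t => -((1 - t) * (y i - x i))).map
    (fun t => (1 - t) • x + t • y)

/-- The momentum `m̂₂`, with density `t(y−x)` along the segment. -/
def segMom₂ {d : ℕ} (x y : Euc d) : Fin d → SignedMeasure (Euc d) := fun i =>
  ((volume.restrict (Icc (0:ℝ) 1)).withDensityᵥ fun t => t * (y i - x i)).map
    (fun t => (1 - t) • x + t • y)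

-- helpers

lemma sum_smul_single {d : ℕ} (v : Euc d) :
    ∑ i, v i • EuclideanSpace.single i (1:ℝ) = v := by
  ext j
  rw [show (∑ i, v i • EuclideanSpace.single i (1:ℝ)) j
      = ∑ i, (v i • EuclideanSpace.single i (1:ℝ)) j from by rw [WithLp.ofLp_sum, Finset.sum_apply]]
  simp [EuclideanSpace.single_apply]

lemma clm_sum_single {d : ℕ} (L : Euc d →L[ℝ] ℝ) (v : Euc d) :
    ∑ i, v i * L (EuclideanSpace.single i (1:ℝ)) = L v := by
  conv_rhs => rw [← sum_smul_single v]
  rw [map_sum]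
  simp [smul_eq_mul]

lemma ibp01 (u u' : ℝ → ℝ) (hu : ∀ t, HasDerivAt u (u' t) t) (hu'c : Continuous u')
    (ψ ψ' : ℝ → ℝ) (hψ : ∀ t, HasDerivAt ψ (ψ' t) t) (hψ'c : Continuous ψ') :
    ∫ t in Icc (0:ℝ) 1, u t * ψ' t
      = u 1 * ψ 1 - u 0 * ψ 0 - ∫ t in Icc (0:ℝ) 1, u' t * ψ t := by
  rw [integral_Icc_eq_integral_Ioc, integral_Icc_eq_integral_Ioc,
    ← intervalIntegral.integral_of_le zero_le_one,
    ← intervalIntegral.integral_of_le zero_le_one]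
  exact intervalIntegral.integral_mul_deriv_eq_deriv_mul (fun t _ => hu t) (fun t _ => hψ t)
    (hu'c.intervalIntegrable 0 1) (hψ'c.intervalIntegrable 0 1)

lemma sInt_eq_of_eq_sub {X : Type*} [MeasurableSpace X] (μ₁ μ₂ : Measure X)
    [IsFiniteMeasure μ₁] [IsFiniteMeasure μ₂] (ν : SignedMeasure X)
    (hν : ν = μ₁.toSignedMeasure - μ₂.toSignedMeasure) (f : X → ℝ)
    (h₁ : Integrable f μ₁) (h₂ : Integrable f μ₂) :
    sInt ν f = (∫ x, f x ∂μ₁) - ∫ x, f x ∂μ₂ := by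
  set p := ν.toJordanDecomposition.posPart with hp
  set n := ν.toJordanDecomposition.negPart with hn
  have hpn : p.toSignedMeasure - n.toSignedMeasure = ν :=
    ν.toSignedMeasure_toJordanDecomposition
  have key : p + μ₂ = n + μ₁ := by
    rw [← Measure.toSignedMeasure_eq_toSignedMeasure_iff,
      Measure.toSignedMeasure_add, Measure.toSignedMeasure_add]
    have : p.toSignedMeasure - n.toSignedMeasure = μ₁.toSignedMeasure - μ₂.toSignedMeasure := by
      rw [hpn, hν]
    linear_combination (norm := abel) this
  obtain ⟨s, hsm, hps, hnsc⟩ := ν.toJordanDecomposition.mutuallySingular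
  have hple : p ≤ μ₁ := by
    intro A
    calc p A = p (A ∩ sᶜ) + p (A ∩ s) := by
          rw [← measure_inter_add_diff A hsm.compl, Set.diff_compl]
      _ ≤ μ₁ (A ∩ sᶜ) + 0 := by
          gcongr ?_ + ?_
          · have h1 : p (A ∩ sᶜ) + μ₂ (A ∩ sᶜ) = n (A ∩ sᶜ) + μ₁ (A ∩ sᶜ) := by
              rw [← Measure.add_apply, ← Measure.add_apply, key]
            have h2 : n (A ∩ sᶜ) = 0 := measure_mono_null inter_subset_right hnsc
            rw [h2, zero_add] at h1
            exact le_trans le_self_add h1.le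
          · exact le_of_eq (measure_mono_null inter_subset_right hps)
      _ ≤ μ₁ A := by rw [add_zero]; exact measure_mono inter_subset_left
  have hnle : n ≤ μ₂ := by
    intro A
    calc n A = n (A ∩ s) + n (A \ s) := (measure_inter_add_diff A hsm).symm
      _ = n (A ∩ s) + n (A ∩ sᶜ) := rfl
      _ ≤ μ₂ (A ∩ s) + 0 := by
          gcongr ?_ + ?_
          · have h1 : p (A ∩ s) + μ₂ (A ∩ s) = n (A ∩ s) + μ₁ (A ∩ s) := by
              rw [← Measure.add_apply, ← Measure.add_apply, key]
            have h2 : p (A ∩ s) = 0 := measure_mono_null inter_subset_right hps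
            rw [h2, zero_add] at h1
            exact le_trans le_self_add h1.symm.le
          · exact le_of_eq (measure_mono_null inter_subset_right hnsc)
      _ ≤ μ₂ A := by rw [add_zero]; exact measure_mono inter_subset_left
  have hfp : Integrable f p := h₁.mono_measure hple
  have hfn : Integrable f n := h₂.mono_measure hnle
  have hint : (∫ x, f x ∂p) + ∫ x, f x ∂μ₂ = (∫ x, f x ∂n) + ∫ x, f x ∂μ₁ := by
    rw [← integral_add_measure hfp h₂, ← integral_add_measure hfn h₁, key]
  rw [sInt, ← hp, ← hn]
  linarith

lemma max_sub_max_neg (a : ℝ) : max a 0 - max (-a) 0 = a := by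
  rcases le_total a 0 with h | h
  · rw [max_eq_right h, max_eq_left (by linarith)]; ring
  · rw [max_eq_left h, max_eq_right (by linarith)]; ring

lemma sInt_map_wd {d : ℕ} (x y : Euc d) (f : ℝ → ℝ) (hf : Continuous f)
    (h : Euc d → ℝ) (hh : Continuous h) :
    sInt (((volume.restrict (Icc (0:ℝ) 1)).withDensityᵥ f).map
        (fun t => (1 - t) • x + t • y)) h
      = ∫ t in Icc (0:ℝ) 1, f t * h ((1 - t) • x + t • y) := by
  set μ₀ := volume.restrict (Icc (0:ℝ) 1) with hμ₀
  set γ : ℝ → Euc d := fun t => (1 - t) • x + t • y with hγdef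
  have hγ : Continuous γ := by fun_prop
  have hfi : Integrable f μ₀ := hf.integrableOn_Icc
  have hfin₁ : IsFiniteMeasure (μ₀.withDensity fun t => ENNReal.ofReal (f t)) :=
    isFiniteMeasure_withDensity_ofReal hfi.2
  have hfin₂ : IsFiniteMeasure (μ₀.withDensity fun t => ENNReal.ofReal (-f t)) :=
    isFiniteMeasure_withDensity_ofReal hfi.neg.2
  set μ₁ := μ₀.withDensity fun t => ENNReal.ofReal (f t) with hμ₁
  set μ₂ := μ₀.withDensity fun t => ENNReal.ofReal (-f t) with hμ₂
  have hwd : μ₀.withDensityᵥ f = μ₁.toSignedMeasure - μ₂.toSignedMeasure :=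
    withDensityᵥ_eq_withDensity_pos_part_sub_withDensity_neg_part hfi
  have hmapped : (μ₀.withDensityᵥ f).map γ
      = (μ₁.map γ).toSignedMeasure - (μ₂.map γ).toSignedMeasure := by
    have : IsFiniteMeasure (μ₁.map γ) := Measure.isFiniteMeasure_map μ₁ γ
    have : IsFiniteMeasure (μ₂.map γ) := Measure.isFiniteMeasure_map μ₂ γ
    rw [hwd]
    have hsub : (μ₁.toSignedMeasure - μ₂.toSignedMeasure).map γ
        = μ₁.toSignedMeasure.map γ - μ₂.toSignedMeasure.map γ :=
      map_sub (VectorMeasure.mapGm γ) _ _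
    rw [hsub]
    congr 1
    · ext i hi
      rw [VectorMeasure.map_apply _ hγ.measurable hi,
        Measure.toSignedMeasure_apply_measurable hi,
        Measure.toSignedMeasure_apply_measurable (hγ.measurable hi),
        map_measureReal_apply hγ.measurable hi]
    · ext i hi
      rw [VectorMeasure.map_apply _ hγ.measurable hi,
        Measure.toSignedMeasure_apply_measurable hi,
        Measure.toSignedMeasure_apply_measurable (hγ.measurable hi),
        map_measureReal_apply hγ.measurable hi]
  rw [hmapped]
  haveI : IsFiniteMeasure (μ₁.map γ) := Measure.isFiniteMeasure_map μ₁ γ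
  haveI : IsFiniteMeasure (μ₂.map γ) := Measure.isFiniteMeasure_map μ₂ γ
  have hnn₁ : Measurable fun t => (f t).toNNReal := measurable_real_toNNReal.comp hf.measurable
  have hnn₂ : Measurable fun t => (-f t).toNNReal :=
    measurable_real_toNNReal.comp hf.neg.measurable
  have hwd₁ : μ₁ = μ₀.withDensity fun t => ((f t).toNNReal : ℝ≥0∞) := rfl
  have hwd₂ : μ₂ = μ₀.withDensity fun t => ((-f t).toNNReal : ℝ≥0∞) := rfl
  have hint₁' : Integrable (fun t => ((f t).toNNReal : ℝ) • h (γ t)) μ₀ := by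
    have : Continuous fun t => max (f t) 0 * h (γ t) :=
      (hf.max continuous_const).mul (hh.comp hγ)
    have heq : (fun t => ((f t).toNNReal : ℝ) • h (γ t)) = fun t => max (f t) 0 * h (γ t) := by
      funext t; rw [smul_eq_mul, Real.coe_toNNReal']
    rw [heq]; exact this.integrableOn_Icc
  have hint₂' : Integrable (fun t => ((-f t).toNNReal : ℝ) • h (γ t)) μ₀ := by
    have : Continuous fun t => max (-f t) 0 * h (γ t) :=
      (hf.neg.max continuous_const).mul (hh.comp hγ)
    have heq : (fun t => ((-f t).toNNReal : ℝ) • h (γ t)) = fun t => max (-f t) 0 * h (γ t) := by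
      funext t; rw [smul_eq_mul, Real.coe_toNNReal']
    rw [heq]; exact this.integrableOn_Icc
  have hint₁ : Integrable h (μ₁.map γ) := by
    rw [integrable_map_measure hh.aestronglyMeasurable hγ.measurable.aemeasurable, hwd₁]
    exact (integrable_withDensity_iff_integrable_smul hnn₁).2 hint₁'
  have hint₂ : Integrable h (μ₂.map γ) := by
    rw [integrable_map_measure hh.aestronglyMeasurable hγ.measurable.aemeasurable, hwd₂]
    exact (integrable_withDensity_iff_integrable_smul hnn₂).2 hint₂'
  rw [sInt_eq_of_eq_sub (μ₁.map γ) (μ₂.map γ) _ rfl h hint₁ hint₂]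
  rw [integral_map hγ.measurable.aemeasurable hh.aestronglyMeasurable,
    integral_map hγ.measurable.aemeasurable hh.aestronglyMeasurable,
    hwd₁, hwd₂, integral_withDensity_eq_integral_smul hnn₁,
    integral_withDensity_eq_integral_smul hnn₂]
  simp only [NNReal.smul_def]
  rw [← integral_sub hint₁' hint₂']
  refine integral_congr_ae (Filter.Eventually.of_forall fun t => ?_)
  simp only [smul_eq_mul, Real.coe_toNNReal']
  rw [← sub_mul, max_sub_max_neg]

/-- The teleportation construction: `∇·m̂₁ = ρ̂ − δ_x`, `∇·m̂₂ = ρ̂ − δ_y` weakly, and the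
Benamou-Brenier actions `A(ρ̂, m̂ᵢ)` are bounded by `|x−y|²/2`. -/
theorem stmt12 (d : ℕ) (hd : 1 ≤ d) (x y : Euc d) :
    (∀ φ : Euc d → ℝ, ContDiff ℝ 1 φ →
      (-(∑ i, sInt (segMom₁ x y i) fun z => fderiv ℝ φ z (EuclideanSpace.single i 1)) =
          (∫ z, φ z ∂segMeas x y) - φ x) ∧
      (-(∑ i, sInt (segMom₂ x y i) fun z => fderiv ℝ φ z (EuclideanSpace.single i 1)) =
          (∫ z, φ z ∂segMeas x y) - φ y)) ∧
    (∀ (a : Euc d →ᵇ ℝ) (b : Euc d →ᵇ Euc d),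
      (∀ z : Euc d, a z + ‖b z‖ ^ 2 / 2 ≤ 0) →
      ((∫ z, a z ∂segMeas x y) + ∑ i, sInt (segMom₁ x y i) (fun z => b z i) ≤ ‖x - y‖ ^ 2 / 2) ∧
      ((∫ z, a z ∂segMeas x y) + ∑ i, sInt (segMom₂ x y i) (fun z => b z i) ≤ ‖x - y‖ ^ 2 / 2)) := by
  set γ : ℝ → Euc d := fun t => (1 - t) • x + t • y with hγdef
  have hγc : Continuous γ := by fun_prop
  have hγ0 : γ 0 = x := by simp [hγdef]
  have hγ1 : γ 1 = y := by simp [hγdef]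
  have hγd : ∀ t : ℝ, HasDerivAt γ (y - x) t := by
    intro t
    have h1 : HasDerivAt (fun t : ℝ => (1 - t) • x) ((-1 : ℝ) • x) t :=
      ((hasDerivAt_id t).const_sub 1).smul_const x
    have h2 : HasDerivAt (fun t : ℝ => t • y) ((1 : ℝ) • y) t :=
      (hasDerivAt_id t).smul_const y
    have h3 := h1.add h2
    have h4 : (-1:ℝ) • x + (1:ℝ) • y = y - x := by rw [neg_one_smul, one_smul]; abel
    exact h4 ▸ h3
  have hργ : ∀ g : Euc d → ℝ, Continuous g →
      (∫ z, g z ∂segMeas x y) = ∫ t in Icc (0:ℝ) 1, g (γ t) := by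
    intro g hg
    rw [segMeas, integral_map hγc.measurable.aemeasurable hg.aestronglyMeasurable]
  constructor
  · -- part (i)
    intro φ hφ
    have hφd : Differentiable ℝ φ := hφ.differentiable one_ne_zero
    have hDc : Continuous fun z => fderiv ℝ φ z := hφ.continuous_fderiv one_ne_zero
    have hD : ∀ v : Euc d, Continuous fun z => fderiv ℝ φ z v := fun v =>
      (ContinuousLinearMap.apply ℝ ℝ v).continuous.comp hDc
    have hψd : ∀ t : ℝ, HasDerivAt (fun t => φ (γ t)) (fderiv ℝ φ (γ t) (y - x)) t :=
      fun t => (hφd (γ t)).hasFDerivAt.comp_hasDerivAt t (hγd t)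
    have hψ'c : Continuous fun t => fderiv ℝ φ (γ t) (y - x) := (hD (y - x)).comp hγc
    have hψc : Continuous fun t => φ (γ t) := hφ.continuous.comp hγc
    have hsub : ∀ i : Fin d, (y - x) i = y i - x i := fun i => rfl
    have hpt : ∀ (L : Euc d →L[ℝ] ℝ) (r : ℝ),
        ∑ i, r * (y i - x i) * L (EuclideanSpace.single i 1) = r * L (y - x) := by
      intro L r
      rw [← clm_sum_single L (y - x), Finset.mul_sum]
      refine Finset.sum_congr rfl fun i _ => ?_
      rw [hsub i]; ring
    constructor
    · have key : ∀ i : Fin d,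
          sInt (segMom₁ x y i) (fun z => fderiv ℝ φ z (EuclideanSpace.single i 1))
            = ∫ t in Icc (0:ℝ) 1,
                -((1 - t) * (y i - x i)) * fderiv ℝ φ (γ t) (EuclideanSpace.single i 1) :=
        fun i => sInt_map_wd x y _ (by fun_prop) _ (hD _)
      have hsum : ∑ i, sInt (segMom₁ x y i)
            (fun z => fderiv ℝ φ z (EuclideanSpace.single i 1))
          = ∫ t in Icc (0:ℝ) 1, (t - 1) * fderiv ℝ φ (γ t) (y - x) := by
        rw [Finset.sum_congr rfl fun i _ => key i]
        have hintg : ∀ i : Fin d, IntegrableOn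
            (fun t => -((1 - t) * (y i - x i)) * fderiv ℝ φ (γ t) (EuclideanSpace.single i 1))
            (Icc (0:ℝ) 1) volume := fun i =>
          Continuous.integrableOn_Icc
            ((((continuous_const.sub continuous_id).mul continuous_const).neg).mul
              ((hD (EuclideanSpace.single i 1)).comp hγc))
        rw [← integral_finset_sum Finset.univ (fun i _ => hintg i)]
        refine integral_congr_ae (Filter.Eventually.of_forall fun t => ?_)
        show ∑ i, -((1 - t) * (y i - x i)) * fderiv ℝ φ (γ t) (EuclideanSpace.single i 1)
            = (t - 1) * fderiv ℝ φ (γ t) (y - x)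
        rw [show (t - 1 : ℝ) = -(1 - t) by ring, ← hpt (fderiv ℝ φ (γ t)) (-(1 - t))]
        refine Finset.sum_congr rfl fun i _ => by ring
      rw [hsum, ibp01 (fun t => t - 1) (fun _ => 1)
        (fun t => (hasDerivAt_id t).sub_const 1) continuous_const _ _ hψd hψ'c]
      have h1 : (∫ t in Icc (0:ℝ) 1, (1:ℝ) * φ (γ t)) = ∫ t in Icc (0:ℝ) 1, φ (γ t) := by
        simp
      rw [h1, hργ φ hφ.continuous, hγ0, hγ1]
      ring
    · have key : ∀ i : Fin d,
          sInt (segMom₂ x y i) (fun z => fderiv ℝ φ z (EuclideanSpace.single i 1))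
            = ∫ t in Icc (0:ℝ) 1,
                (t * (y i - x i)) * fderiv ℝ φ (γ t) (EuclideanSpace.single i 1) :=
        fun i => sInt_map_wd x y _ (by fun_prop) _ (hD _)
      have hsum : ∑ i, sInt (segMom₂ x y i)
            (fun z => fderiv ℝ φ z (EuclideanSpace.single i 1))
          = ∫ t in Icc (0:ℝ) 1, t * fderiv ℝ φ (γ t) (y - x) := by
        rw [Finset.sum_congr rfl fun i _ => key i]
        have hintg : ∀ i : Fin d, IntegrableOn
            (fun t => (t * (y i - x i)) * fderiv ℝ φ (γ t) (EuclideanSpace.single i 1))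
            (Icc (0:ℝ) 1) volume := fun i =>
          Continuous.integrableOn_Icc
            ((continuous_id.mul continuous_const).mul
              ((hD (EuclideanSpace.single i 1)).comp hγc))
        rw [← integral_finset_sum Finset.univ (fun i _ => hintg i)]
        refine integral_congr_ae (Filter.Eventually.of_forall fun t => ?_)
        show ∑ i, (t * (y i - x i)) * fderiv ℝ φ (γ t) (EuclideanSpace.single i 1)
            = t * fderiv ℝ φ (γ t) (y - x)
        rw [← hpt (fderiv ℝ φ (γ t)) t]
      rw [hsum, ibp01 (fun t => t) (fun _ => 1)
        (fun t => hasDerivAt_id t) continuous_const _ _ hψd hψ'c]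
      have h1 : (∫ t in Icc (0:ℝ) 1, (1:ℝ) * φ (γ t)) = ∫ t in Icc (0:ℝ) 1, φ (γ t) := by
        simp
      rw [h1, hργ φ hφ.continuous, hγ0, hγ1]
      ring
  · -- part (ii)
    intro a b hab
    have hbc : ∀ i : Fin d, Continuous fun z : Euc d => b z i := fun i =>
      (EuclideanSpace.proj (𝕜 := ℝ) i).continuous.comp b.continuous
    have hinner : ∀ w : Euc d, ∑ i, (y i - x i) * w i = (inner ℝ (y - x) w : ℝ) := by
      intro w
      rw [PiLp.inner_apply]
      refine Finset.sum_congr rfl fun i _ => ?_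
      have h : (y - x) i = y i - x i := rfl
      simp [RCLike.inner_apply, h]; ring
    have hinnerc : Continuous fun t => (inner ℝ (y - x) (b (γ t)) : ℝ) :=
      continuous_const.inner (b.continuous.comp hγc)
    have hIccvol : (volume (Icc (0:ℝ) 1)).toReal = 1 := by
      rw [Real.volume_Icc]; norm_num
    have keybound : ∀ r : ℝ, |r| ≤ 1 → ∀ z : Euc d,
        a z + r * (inner ℝ (y - x) (b z) : ℝ) ≤ ‖x - y‖ ^ 2 / 2 := by
      intro r hr z
      have h1 := hab z
      have h2 : |(inner ℝ (y - x) (b z) : ℝ)| ≤ ‖y - x‖ * ‖b z‖ := abs_real_inner_le_norm _ _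
      have h3 : ‖x - y‖ = ‖y - x‖ := norm_sub_rev x y
      rw [h3]
      have h4 : r * (inner ℝ (y - x) (b z) : ℝ) ≤ ‖y - x‖ * ‖b z‖ := by
        calc r * (inner ℝ (y - x) (b z) : ℝ) ≤ |r * (inner ℝ (y - x) (b z) : ℝ)| := le_abs_self _
          _ = |r| * |(inner ℝ (y - x) (b z) : ℝ)| := abs_mul _ _
          _ ≤ 1 * (‖y - x‖ * ‖b z‖) := by
              apply mul_le_mul hr h2 (abs_nonneg _)
              norm_num
          _ = ‖y - x‖ * ‖b z‖ := one_mul _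
      nlinarith [sq_nonneg (‖y - x‖ - ‖b z‖), norm_nonneg (b z), norm_nonneg (y - x)]
    have main : ∀ (m : Fin d → SignedMeasure (Euc d)) (r : ℝ → ℝ), Continuous r →
        (∀ t ∈ Icc (0:ℝ) 1, |r t| ≤ 1) →
        (∀ i : Fin d, sInt (m i) (fun z => b z i)
          = ∫ t in Icc (0:ℝ) 1, (r t * (y i - x i)) * b (γ t) i) →
        (∫ z, a z ∂segMeas x y) + ∑ i, sInt (m i) (fun z => b z i) ≤ ‖x - y‖ ^ 2 / 2 := by
      intro m r hrc hr hkey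
      have hsum : ∑ i, sInt (m i) (fun z => b z i)
          = ∫ t in Icc (0:ℝ) 1, r t * (inner ℝ (y - x) (b (γ t)) : ℝ) := by
        rw [Finset.sum_congr rfl fun i _ => hkey i]
        have hintg : ∀ i : Fin d, IntegrableOn
            (fun t => (r t * (y i - x i)) * b (γ t) i) (Icc (0:ℝ) 1) volume := fun i =>
          Continuous.integrableOn_Icc
            ((hrc.mul continuous_const).mul ((hbc i).comp hγc))
        rw [← integral_finset_sum Finset.univ (fun i _ => hintg i)]
        refine integral_congr_ae (Filter.Eventually.of_forall fun t => ?_)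
        show ∑ i, (r t * (y i - x i)) * b (γ t) i
            = r t * (inner ℝ (y - x) (b (γ t)) : ℝ)
        rw [← hinner (b (γ t)), Finset.mul_sum]
        refine Finset.sum_congr rfl fun i _ => by ring
      have hint_a : IntegrableOn (fun t => a (γ t)) (Icc (0:ℝ) 1) volume :=
        Continuous.integrableOn_Icc (a.continuous.comp hγc)
      have hint_m : IntegrableOn (fun t => r t * (inner ℝ (y - x) (b (γ t)) : ℝ))
          (Icc (0:ℝ) 1) volume := Continuous.integrableOn_Icc (hrc.mul hinnerc)
      rw [hsum, hργ a a.continuous, ← integral_add hint_a hint_m]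
      calc (∫ t in Icc (0:ℝ) 1, (a (γ t) + r t * (inner ℝ (y - x) (b (γ t)) : ℝ)))
          ≤ ∫ t in Icc (0:ℝ) 1, (‖x - y‖ ^ 2 / 2 : ℝ) := by
            refine setIntegral_mono_on
              (((a.continuous.comp hγc).add (hrc.mul hinnerc)).integrableOn_Icc)
              (integrableOn_const (by rw [Real.volume_Icc]; norm_num))
              measurableSet_Icc (fun t ht => keybound (r t) (hr t ht) (γ t))
        _ = ‖x - y‖ ^ 2 / 2 := by rw [setIntegral_const, measureReal_def, hIccvol, one_smul]
    constructor
    · refine main (segMom₁ x y) (fun t => -(1 - t)) (by fun_prop) (fun t ht => ?_) (fun i => ?_)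
      · rw [abs_neg, abs_of_nonneg (by linarith [ht.2])]; linarith [ht.1]
      · have := sInt_map_wd x y (fun t => -((1 - t) * (y i - x i))) (by fun_prop)
          (fun z => b z i) (hbc i)
        rw [segMom₁]
        rw [this]
        refine integral_congr_ae (Filter.Eventually.of_forall fun t => by ring)
    · refine main (segMom₂ x y) (fun t => t) continuous_id (fun t ht => ?_) (fun i => ?_)
      · rw [abs_of_nonneg ht.1]; exact ht.2
      · have := sInt_map_wd x y (fun t => t * (y i - x i)) (by fun_prop)
          (fun z => b z i) (hbc i)
        rw [segMom₂]
        rw [this]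

end
end
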